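/- arXiv:2301.12280 — 5 statements merged into one kernel-verified Lean document; each statement's English description precedes it below -/
import Mathlib

section
/- Let (M_k)_{k∈ℕ} be a sequence of self-maps of ℝ^n such that each M_k is Lipschitz continuous with a constant L_k ∈ (0,1), and let L̄ = sup_{k} L_k with L̄ < 1. Suppose each M_k has a fixed point x̄_k ∈ ℝ^n and that ‖x̄_{k+1} − x̄_k‖ ≤ δ for all k ∈ ℕ, where δ ≥ 0. Then for any initial point x_0 ∈ ℝ^n, the iterates defined by x_{k+1} = M_k(x_k) satisfy limsup_{k→∞} ‖x_k − x̄_k‖ ≤ δ/(1 − L̄). -/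
/-- iterates of a sequence of contractions track the drifting fixed points
with asymptotic error `limsup ‖x_k − x̄_k‖ ≤ δ/(1 − L̄)`. -/
theorem stmt_1 (n : ℕ) (M : ℕ → EuclideanSpace ℝ (Fin n) → EuclideanSpace ℝ (Fin n))
    (L : ℕ → ℝ) (hL : ∀ k, 0 < L k ∧ L k < 1)
    (hLip : ∀ k x y, ‖M k x - M k y‖ ≤ L k * ‖x - y‖)
    (Lbar : ℝ) (hLbar : IsLUB (Set.range L) Lbar) (hLbar1 : Lbar < 1)
    (xbar : ℕ → EuclideanSpace ℝ (Fin n)) (hfix : ∀ k, M k (xbar k) = xbar k)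
    (δ : ℝ) (hδ : 0 ≤ δ) (hdrift : ∀ k, ‖xbar (k + 1) - xbar k‖ ≤ δ)
    (x : ℕ → EuclideanSpace ℝ (Fin n)) (hx : ∀ k, x (k + 1) = M k (x k)) :
    Filter.atTop.limsup (fun k => ‖x k - xbar k‖) ≤ δ / (1 - Lbar) := by
  set e : ℕ → ℝ := fun k => ‖x k - xbar k‖ with he
  have hLb0 : 0 < Lbar := lt_of_lt_of_le (hL 0).1 (hLbar.1 ⟨0, rfl⟩)
  have h1L : 0 < 1 - Lbar := by linarith
  set c : ℝ := δ / (1 - Lbar) with hc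
  have hc0 : 0 ≤ c := div_nonneg hδ h1L.le
  have hstep : ∀ k, e (k + 1) ≤ Lbar * e k + δ := by
    intro k
    have h1 : ‖x (k+1) - xbar (k+1)‖ ≤ ‖M k (x k) - M k (xbar k)‖ + ‖xbar k - xbar (k+1)‖ := by
      rw [hx k]
      calc ‖M k (x k) - xbar (k+1)‖
          = ‖(M k (x k) - M k (xbar k)) + (M k (xbar k) - xbar (k+1))‖ := by abel_nf
        _ ≤ ‖M k (x k) - M k (xbar k)‖ + ‖M k (xbar k) - xbar (k+1)‖ := norm_add_le _ _
        _ = ‖M k (x k) - M k (xbar k)‖ + ‖xbar k - xbar (k+1)‖ := by rw [hfix k]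
    have h2 : ‖M k (x k) - M k (xbar k)‖ ≤ Lbar * e k := by
      refine (hLip k _ _).trans ?_
      exact mul_le_mul_of_nonneg_right (hLbar.1 ⟨k, rfl⟩) (norm_nonneg _)
    have h3 : ‖xbar k - xbar (k+1)‖ ≤ δ := by rw [norm_sub_rev]; exact hdrift k
    calc e (k+1) ≤ ‖M k (x k) - M k (xbar k)‖ + ‖xbar k - xbar (k+1)‖ := h1
      _ ≤ Lbar * e k + δ := add_le_add h2 h3
  have hbound : ∀ k, e k ≤ Lbar ^ k * e 0 + c := by
    intro k
    induction k with
    | zero => simp [hc0]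
    | succ k ih =>
      have key : Lbar * c + δ = c := by
        rw [hc]; field_simp [h1L.ne']
        ring
      calc e (k+1) ≤ Lbar * e k + δ := hstep k
        _ ≤ Lbar * (Lbar ^ k * e 0 + c) + δ := by
            have := mul_le_mul_of_nonneg_left ih hLb0.le
            linarith
        _ = Lbar ^ (k+1) * e 0 + (Lbar * c + δ) := by ring
        _ = Lbar ^ (k+1) * e 0 + c := by rw [key]
  have htend : Filter.Tendsto (fun k => Lbar ^ k * e 0 + c) Filter.atTop (nhds c) := by
    have h0 : Filter.Tendsto (fun k : ℕ => Lbar ^ k) Filter.atTop (nhds 0) :=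
      tendsto_pow_atTop_nhds_zero_of_lt_one hLb0.le hLbar1
    have := (h0.mul_const (e 0)).add_const c
    simpa using this
  have hle : Filter.atTop.limsup e ≤ Filter.atTop.limsup (fun k => Lbar ^ k * e 0 + c) := by
    exact Filter.limsup_le_limsup (Filter.Eventually.of_forall hbound)
      (Filter.isCoboundedUnder_le_of_eventually_le Filter.atTop
        (Filter.Eventually.of_forall fun k => norm_nonneg _))
      htend.isBoundedUnder_le
  calc Filter.atTop.limsup e ≤ _ := hle
    _ = c := htend.limsup_eq
end

section
/- Let W ∈ ℝ^{N×N} be a symmetric doubly stochastic matrix whose diagonal entries are all strictly positive. Then the linear map x ↦ Wx on ℝ^N is a paracontraction with respect to the Euclidean norm: for every y ∈ ℝ^N with Wy = y and every x ∈ ℝ^N with Wx ≠ x, one has ‖Wx − y‖ < ‖x − y‖. -/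
/-- The linear map `x ↦ Wx` on `ℝ^N`, viewed as a map of `EuclideanSpace ℝ (Fin N)`. -/
noncomputable def mulVecE {N : ℕ} (W : Matrix (Fin N) (Fin N) ℝ)
    (x : EuclideanSpace ℝ (Fin N)) : EuclideanSpace ℝ (Fin N) :=
  (WithLp.equiv 2 (Fin N → ℝ)).symm (W.mulVec (WithLp.equiv 2 (Fin N → ℝ) x))


lemma key (N : ℕ) (W : Matrix (Fin N) (Fin N) ℝ)
    (hsymm : W.IsSymm) (hnonneg : ∀ i j, 0 ≤ W i j)
    (hrow : ∀ i, ∑ j, W i j = 1) (hcol : ∀ j, ∑ i, W i j = 1)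
    (hdiag : ∀ i, 0 < W i i) (z : Fin N → ℝ) (hz : W.mulVec z ≠ z) :
    ∑ i, (W.mulVec z i)^2 < ∑ i, (z i)^2 := by
  have hW : ∀ i j, W i j = W j i := fun i j => by
    have := congrFun (congrFun hsymm j) i
    simpa [Matrix.transpose_apply] using this
  set A : Fin N → Fin N → ℝ := fun j k => ∑ i, W i j * W i k with hA
  have hAnn : ∀ j k, 0 ≤ A j k := fun j k =>
    Finset.sum_nonneg fun i _ => mul_nonneg (hnonneg i j) (hnonneg i k)
  have hArow : ∀ j, ∑ k, A j k = 1 := by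
    intro j
    rw [Finset.sum_comm]
    calc ∑ i, ∑ k, W i j * W i k = ∑ i, W i j * ∑ k, W i k := by
          simp [Finset.mul_sum]
      _ = 1 := by simp [hrow, hcol j]
  have hAcol : ∀ k, ∑ j, A j k = 1 := by
    intro k
    rw [Finset.sum_comm]
    calc ∑ i, ∑ j, W i j * W i k = ∑ i, (∑ j, W i j) * W i k := by
          simp [Finset.sum_mul]
      _ = 1 := by simp [hrow, hcol k]
  -- h1
  have h1 : ∑ i, (W.mulVec z i)^2 = ∑ j, ∑ k, A j k * (z j * z k) := by
    have : ∀ i, (W.mulVec z i)^2 = ∑ j, ∑ k, (W i j * W i k) * (z j * z k) := by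
      intro i
      simp only [Matrix.mulVec, dotProduct, sq, Finset.sum_mul_sum]
      exact Finset.sum_congr rfl fun j _ => Finset.sum_congr rfl fun k _ => by ring
    rw [Finset.sum_congr rfl fun i _ => this i]
    rw [Finset.sum_comm]
    refine Finset.sum_congr rfl fun j _ => ?_
    rw [Finset.sum_comm]
    refine Finset.sum_congr rfl fun k _ => ?_
    rw [hA]
    rw [Finset.sum_mul]
  -- expansion of S
  have e1 : ∑ j, ∑ k, A j k * (z j)^2 = ∑ i, (z i)^2 := by
    refine Finset.sum_congr rfl fun j _ => ?_
    rw [← Finset.sum_mul, hArow j, one_mul]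
  have e2 : ∑ j, ∑ k, A j k * (z k)^2 = ∑ i, (z i)^2 := by
    rw [Finset.sum_comm]
    refine Finset.sum_congr rfl fun k _ => ?_
    rw [← Finset.sum_mul, hAcol k, one_mul]
  have h2 : ∑ j, ∑ k, A j k * (z j - z k)^2
      = 2 * (∑ i, (z i)^2 - ∑ j, ∑ k, A j k * (z j * z k)) := by
    have expand : ∀ j k, A j k * (z j - z k)^2
        = A j k * (z j)^2 + A j k * (z k)^2 - 2 * (A j k * (z j * z k)) := by
      intro j k; ring
    calc ∑ j, ∑ k, A j k * (z j - z k)^2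
        = ∑ j, ∑ k, (A j k * (z j)^2 + A j k * (z k)^2 - 2 * (A j k * (z j * z k))) := by
          exact Finset.sum_congr rfl fun j _ => Finset.sum_congr rfl fun k _ => expand j k
      _ = (∑ j, ∑ k, A j k * (z j)^2) + (∑ j, ∑ k, A j k * (z k)^2)
            - 2 * ∑ j, ∑ k, A j k * (z j * z k) := by
          simp [Finset.sum_add_distrib, Finset.sum_sub_distrib, Finset.mul_sum]
      _ = 2 * (∑ i, (z i)^2 - ∑ j, ∑ k, A j k * (z j * z k)) := by
          rw [e1, e2]; ring
  -- positivity
  obtain ⟨i, hi⟩ := Function.ne_iff.mp hz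
  have hj : ∃ j, W i j ≠ 0 ∧ z j ≠ z i := by
    by_contra h
    push_neg at h
    apply hi
    have : W.mulVec z i = ∑ j, W i j * z i := by
      simp only [Matrix.mulVec, dotProduct]
      refine Finset.sum_congr rfl fun j _ => ?_
      by_cases hw : W i j = 0
      · simp [hw]
      · rw [h j hw]
    rw [this, ← Finset.sum_mul, hrow i, one_mul]
  obtain ⟨j, hWij, hzj⟩ := hj
  have hAij : 0 < A i j := by
    have hterm : 0 < W i i * W i j := by
      have := (hnonneg i j).lt_of_ne (Ne.symm hWij)
      exact mul_pos (hdiag i) this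
    have : W i i * W i j ≤ A i j := by
      have h' : W i i * W i j = W i i * W i i * 0 + W i i * W i j := by ring
      calc W i i * W i j = (fun k => W k i * W k j) i := by rw [hW i i]
        _ ≤ ∑ k, W k i * W k j :=
          Finset.single_le_sum (fun k _ => mul_nonneg (hnonneg k i) (hnonneg k j))
            (Finset.mem_univ i)
    linarith
  have hS : 0 < ∑ j, ∑ k, A j k * (z j - z k)^2 := by
    refine Finset.sum_pos' (fun j _ => Finset.sum_nonneg fun k _ =>
      mul_nonneg (hAnn j k) (sq_nonneg _)) ⟨i, Finset.mem_univ i, ?_⟩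
    refine Finset.sum_pos' (fun k _ => mul_nonneg (hAnn i k) (sq_nonneg _))
      ⟨j, Finset.mem_univ j, ?_⟩
    have hne : z i - z j ≠ 0 := sub_ne_zero.mpr (Ne.symm hzj)
    exact mul_pos hAij (by positivity)
  linarith [h1, h2, hS]

/-- a symmetric doubly stochastic matrix with strictly positive diagonal
is a paracontraction with respect to the Euclidean norm. -/
theorem stmt_2 (N : ℕ) (W : Matrix (Fin N) (Fin N) ℝ)
    (hsymm : W.IsSymm)
    (hnonneg : ∀ i j, 0 ≤ W i j)
    (hrow : ∀ i, ∑ j, W i j = 1)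
    (hcol : ∀ j, ∑ i, W i j = 1)
    (hdiag : ∀ i, 0 < W i i) :
    ∀ y : EuclideanSpace ℝ (Fin N), mulVecE W y = y →
      ∀ x : EuclideanSpace ℝ (Fin N), mulVecE W x ≠ x →
        ‖mulVecE W x - y‖ < ‖x - y‖ := by
  intro y hy x hx
  set u := WithLp.equiv 2 (Fin N → ℝ) x with hu
  set v := WithLp.equiv 2 (Fin N → ℝ) y with hv
  have hy' : W.mulVec v = v := by
    rw [mulVecE, Equiv.symm_apply_eq] at hy
    exact hy
  have hx' : W.mulVec u ≠ u := by
    intro h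
    apply hx
    rw [mulVecE, Equiv.symm_apply_eq, h]
  have hz : W.mulVec (u - v) ≠ u - v := by
    rw [Matrix.mulVec_sub, hy']
    intro h
    exact hx' (sub_left_inj.mp h)
  have hlt := key N W hsymm hnonneg hrow hcol hdiag (u - v) hz
  rw [Matrix.mulVec_sub, hy'] at hlt
  rw [EuclideanSpace.norm_eq, EuclideanSpace.norm_eq]
  apply Real.sqrt_lt_sqrt (Finset.sum_nonneg fun i _ => by positivity)
  simpa [mulVecE, Real.norm_eq_abs, sq_abs, hu,
    hv] using hlt
end

section
/- Let W ∈ ℝ^{N×N} be a symmetric doubly stochastic matrix whose diagonal entries are all strictly positive. Then every eigenvalue of W lies in the half-open interval (−1, 1]: if λ ∈ ℝ and v ∈ ℝ^N with v ≠ 0 satisfy Wv = λv, then −1 < λ ≤ 1. -/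
/-- every (real) eigenvalue of a symmetric doubly stochastic matrix with
strictly positive diagonal entries lies in the half-open interval `(−1, 1]`. -/
theorem stmt_3 (N : ℕ) (W : Matrix (Fin N) (Fin N) ℝ)
    (hsymm : W.IsSymm)
    (hnonneg : ∀ i j, 0 ≤ W i j)
    (hrow : ∀ i, ∑ j, W i j = 1)
    (hcol : ∀ j, ∑ i, W i j = 1)
    (hdiag : ∀ i, 0 < W i i) :
    ∀ (lam : ℝ) (v : Fin N → ℝ), v ≠ 0 → W.mulVec v = lam • v → -1 < lam ∧ lam ≤ 1 := by
  intro lam v hv hWv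
  have hN : Nonempty (Fin N) := by
    by_contra h
    rw [not_nonempty_iff] at h
    exact hv (funext fun i => (h.false i).elim)
  obtain ⟨i, -, hi⟩ := Finset.exists_max_image Finset.univ (fun j => |v j|)
    Finset.univ_nonempty
  have hi' : ∀ j, |v j| ≤ |v i| := fun j => hi j (Finset.mem_univ j)
  -- WLOG v i ≥ 0 by flipping sign
  set u : Fin N → ℝ := if 0 ≤ v i then v else -v with hu
  have hui : u i = |v i| := by
    by_cases h : 0 ≤ v i
    · simp [hu, h, abs_of_nonneg h]
    · simp [hu, h, abs_of_neg (lt_of_not_ge h)]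
  have huj : ∀ j, |u j| = |v j| := by
    intro j
    by_cases h : 0 ≤ v i <;> simp [hu, h]
  have hWu : W.mulVec u = lam • u := by
    by_cases h : 0 ≤ v i
    · simpa [hu, h] using hWv
    · simp only [hu, if_neg h]
      rw [Matrix.mulVec_neg, hWv]
      funext j; simp
  have hipos : 0 < u i := by
    rw [hui]
    rcases eq_or_lt_of_le (abs_nonneg (v i)) with h | h
    · exfalso
      apply hv
      funext j
      have := hi' j
      rw [← h] at this
      simpa using le_antisymm this (abs_nonneg _)
    · exact h
  have heq : ∑ j, W i j * u j = lam * u i := by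
    have := congrFun hWu i
    simpa [Matrix.mulVec, dotProduct] using this
  have hbd : ∀ j, -(W i j * u i) ≤ W i j * u j ∧ W i j * u j ≤ W i j * u i := by
    intro j
    have h1 : |u j| ≤ u i := by rw [huj, hui]; exact hi' j
    constructor
    · rw [← mul_neg]
      exact mul_le_mul_of_nonneg_left (neg_le_of_abs_le h1) (hnonneg i j)
    · exact mul_le_mul_of_nonneg_left (le_of_abs_le h1) (hnonneg i j)
  -- upper bound
  have hupper : lam ≤ 1 := by
    have : lam * u i ≤ 1 * u i := by
      rw [← heq, one_mul]
      calc ∑ j, W i j * u j ≤ ∑ j, W i j * u i := Finset.sum_le_sum fun j _ => (hbd j).2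
        _ = (∑ j, W i j) * u i := by rw [Finset.sum_mul]
        _ = u i := by rw [hrow i, one_mul]
    exact le_of_mul_le_mul_right this hipos
  -- lower bound
  have hlow : -1 < lam := by
    have key : ∑ j, W i j * u j > -1 * u i := by
      have hsplit : ∑ j, W i j * u j
          = W i i * u i + ∑ j ∈ Finset.univ.erase i, W i j * u j := by
        rw [← Finset.add_sum_erase _ _ (Finset.mem_univ i)]
      have h2 : ∑ j ∈ Finset.univ.erase i, W i j * u j
          ≥ ∑ j ∈ Finset.univ.erase i, -(W i j * u i) :=
        Finset.sum_le_sum fun j _ => (hbd j).1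
      have h3 : ∑ j ∈ Finset.univ.erase i, -(W i j * u i)
          = -((1 - W i i) * u i) := by
        rw [Finset.sum_neg_distrib, ← Finset.sum_mul]
        congr 2
        have := Finset.add_sum_erase Finset.univ (fun j => W i j) (Finset.mem_univ i)
        rw [hrow i] at this
        linarith
      have := hdiag i
      nlinarith [h2, h3, hsplit, hipos]
    rw [heq] at key
    have := lt_of_mul_lt_mul_right (by linarith [key] : (-1) * u i < lam * u i) hipos.le
    linarith
  exact ⟨hlow, hupper⟩
end

section
/- Let T_1, T_2 : ℝ^n → ℝ^n be paracontractions with respect to the Euclidean norm, and suppose they have a common fixed point, i.e. fix(T_1) ∩ fix(T_2) ≠ ∅. Then the composition T_1 ∘ T_2 is a paracontraction, and fix(T_1 ∘ T_2) = fix(T_1) ∩ fix(T_2). -/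
/-- A map `T : ℝ^n → ℝ^n` is a paracontraction w.r.t. the Euclidean norm if
`‖T x − y‖ < ‖x − y‖` for every fixed point `y` of `T` and every non-fixed point `x`. -/
def IsParacontraction {n : ℕ} (T : EuclideanSpace ℝ (Fin n) → EuclideanSpace ℝ (Fin n)) : Prop :=
  ∀ y, T y = y → ∀ x, T x ≠ x → ‖T x - y‖ < ‖x - y‖

/-- the composition of two paracontractions with a common fixed point is a
paracontraction, and its fixed-point set is the intersection of the fixed-point sets. -/
theorem stmt_5 (n : ℕ) (T1 T2 : EuclideanSpace ℝ (Fin n) → EuclideanSpace ℝ (Fin n))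
    (h1 : IsParacontraction T1) (h2 : IsParacontraction T2)
    (hcommon : ({x | T1 x = x} ∩ {x | T2 x = x}).Nonempty) :
    IsParacontraction (T1 ∘ T2) ∧
      {x | (T1 ∘ T2) x = x} = {x | T1 x = x} ∩ {x | T2 x = x} := by
  obtain ⟨z, hz1, hz2⟩ := hcommon
  have hz1 : T1 z = z := hz1
  have hz2 : T2 z = z := hz2
  have hset : {x | (T1 ∘ T2) x = x} = {x | T1 x = x} ∩ {x | T2 x = x} := by
    ext x
    simp only [Set.mem_inter_iff, Set.mem_setOf_eq, Function.comp_apply]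
    constructor
    · intro hx
      have h2x : T2 x = x := by
        by_contra hne
        have hlt : ‖T2 x - z‖ < ‖x - z‖ := h2 z hz2 x hne
        have hle : ‖T1 (T2 x) - z‖ ≤ ‖T2 x - z‖ := by
          by_cases hf : T1 (T2 x) = T2 x
          · rw [hf]
          · exact le_of_lt (h1 z hz1 (T2 x) hf)
        rw [hx] at hle
        linarith
      rw [h2x] at hx
      exact ⟨hx, h2x⟩
    · rintro ⟨ha, hb⟩
      rw [hb, ha]
  refine ⟨?_, hset⟩
  intro y hy x hx
  have hy' : y ∈ {x | T1 x = x} ∩ {x | T2 x = x} := by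
    rw [← hset]; exact hy
  obtain ⟨hy1, hy2⟩ := hy'
  have hy1 : T1 y = y := hy1
  have hy2 : T2 y = y := hy2
  simp only [Function.comp_apply] at hx ⊢
  by_cases h2x : T2 x = x
  · rw [h2x] at hx ⊢
    exact h1 y hy1 x hx
  · have hlt : ‖T2 x - y‖ < ‖x - y‖ := h2 y hy2 x h2x
    have hle : ‖T1 (T2 x) - y‖ ≤ ‖T2 x - y‖ := by
      by_cases hf : T1 (T2 x) = T2 x
      · rw [hf]
      · exact le_of_lt (h1 y hy1 (T2 x) hf)
    linarith
end

section
/- Let v be a transferable-utility coalitional game on I = {1,…,N} with nonempty core C(v) ≠ ∅. For each i ∈ I, let T_i : ℝ^N → ℝ^N be a paracontraction with respect to the Euclidean norm whose fixed-point set is the bounding set X_i(v), and define T : (ℝ^N)^N → (ℝ^N)^N blockwise by T(x_1,…,x_N) = (T_1(x_1),…,T_N(x_N)). Let W ∈ ℝ^{N×N} be a symmetric doubly stochastic matrix with strictly positive diagonal entries that is irreducible (for all i,j there exists m ≥ 1 with (W^m)_{ij} > 0). Then fix(T ∘ (W ⊗ I_N)) = A ∩ (⋂_{i∈I} X_i(v))^N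 = {(c,…,c) : c ∈ C(v)}, the set of consensus vectors whose common block is a core allocation. -/
/-- The bounding set of player `i`:
`X_i(v) = {x : Σ_j x_j = v(I), Σ_{j∈S} x_j ≥ v(S) for every S ⊆ I with i ∈ S}`. -/
def boundingSet {N : ℕ} (v : Finset (Fin N) → ℝ) (i : Fin N) :
    Set (EuclideanSpace ℝ (Fin N)) :=
  {x | ∑ j, x j = v Finset.univ ∧
    ∀ S : Finset (Fin N), i ∈ S → v S ≤ ∑ j ∈ S, x j}

/-- The core of a TU coalitional game `v` on `I = {1,…,N}`:
`C(v) = {x : Σ_i x_i = v(I), Σ_{i∈S} x_i ≥ v(S) for every nonempty S ⊆ I}`. -/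
def core {N : ℕ} (v : Finset (Fin N) → ℝ) : Set (EuclideanSpace ℝ (Fin N)) :=
  {x | ∑ i, x i = v Finset.univ ∧
    ∀ S : Finset (Fin N), S.Nonempty → v S ≤ ∑ i ∈ S, x i}

/-!
Fix a core allocation `c`; it is a common fixed point of all `T i`. Averaging with a doubly
stochastic `W` does not increase `∑ i, ‖x i - c‖`, while each paracontraction `T i` strictly
decreases `‖· - c‖` off its fixed points. Hence at a fixed point `x` of `T ∘ (W ⊗ I)` every average
`∑ j, W i j • x j` is already fixed by `T i` and equals `x i`. Every linear functional of `x` is then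
a `W`-harmonic vector, which by the maximum principle for irreducible stochastic matrices is
constant, so `x` is a consensus vector.
-/

open Finset Matrix

section Stochastic

variable {ι : Type*} [Fintype ι] [DecidableEq ι] {W : Matrix ι ι ℝ}

lemma pow_mulVec_eq_self {u : ι → ℝ} (hu : W *ᵥ u = u) (m : ℕ) : (W ^ m) *ᵥ u = u := by
  induction m with
  | zero => simp
  | succ m ih => rw [pow_succ, ← mulVec_mulVec, hu, ih]

/-- Maximum principle: a harmonic vector of an irreducible stochastic matrix is constant. -/
theorem apply_eq_of_mulVec_eq_self (hW : W ∈ rowStochastic ℝ ι)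
    (hirr : ∀ i j, ∃ m, 0 < (W ^ m) i j) {u : ι → ℝ} (hu : W *ᵥ u = u) (i j : ι) :
    u i = u j := by
  obtain ⟨k, -, hk⟩ := exists_max_image univ u ⟨i, mem_univ i⟩
  suffices h : ∀ l, u l = u k by rw [h i, h j]
  intro l
  obtain ⟨m, hm⟩ := hirr k l
  have hP : W ^ m ∈ rowStochastic ℝ ι := pow_mem hW m
  have hzero : ∑ l', (W ^ m) k l' * (u k - u l') = 0 := by
    simp only [mul_sub, sum_sub_distrib, ← sum_mul, sum_row_of_mem_rowStochastic hP, one_mul]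
    rw [sub_eq_zero, eq_comm]
    exact congrFun (pow_mulVec_eq_self hu m) k
  have hterm := (sum_eq_zero_iff_of_nonneg fun l' _ => mul_nonneg
    (nonneg_of_mem_rowStochastic hP) (sub_nonneg.2 (hk l' (mem_univ l')))).1 hzero l (mem_univ l)
  linarith [(mul_eq_zero.1 hterm).resolve_left hm.ne']

theorem eq_of_sum_smul_eq_self {E : Type*} [AddCommGroup E] [Module ℝ E]
    (hW : W ∈ rowStochastic ℝ ι) (hirr : ∀ i j, ∃ m, 0 < (W ^ m) i j) {x : ι → E}
    (hx : ∀ i, ∑ j, W i j • x j = x i) (i j : ι) : x i = x j := by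
  rw [← sub_eq_zero, ← Module.forall_dual_apply_eq_zero_iff ℝ]
  intro φ
  rw [map_sub, sub_eq_zero]
  refine apply_eq_of_mulVec_eq_self hW hirr (u := fun l => φ (x l)) (funext fun l => ?_) i j
  simp [mulVec, dotProduct, ← hx l]

end Stochastic

section Paracontraction

variable {ι E : Type*} [Fintype ι] [DecidableEq ι] [NormedAddCommGroup E] [NormedSpace ℝ E]
  {W : Matrix ι ι ℝ}

theorem sum_norm_sum_smul_sub_le (hW : W ∈ doublyStochastic ℝ ι) (x : ι → E) (c : E) :
    ∑ i, ‖∑ j, W i j • x j - c‖ ≤ ∑ i, ‖x i - c‖ := by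
  have hrow (i : ι) : ∑ j, W i j • x j - c = ∑ j, W i j • (x j - c) := by
    simp only [smul_sub, sum_sub_distrib, ← sum_smul, sum_row_of_mem_doublyStochastic hW, one_smul]
  calc ∑ i, ‖∑ j, W i j • x j - c‖ ≤ ∑ i, ∑ j, W i j * ‖x j - c‖ := by
        refine sum_le_sum fun i _ => ?_
        rw [hrow]
        refine (norm_sum_le _ _).trans_eq (sum_congr rfl fun j _ => ?_)
        rw [norm_smul, Real.norm_of_nonneg (nonneg_of_mem_doublyStochastic hW)]
    _ = ∑ j, ‖x j - c‖ := by
        rw [sum_comm]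
        simp only [← sum_mul, sum_col_of_mem_doublyStochastic hW, one_mul]

theorem sum_smul_eq_self_of_paracontraction (hW : W ∈ doublyStochastic ℝ ι) (T : ι → E → E)
    (c : E) (hT : ∀ i x, T i x ≠ x → ‖T i x - c‖ < ‖x - c‖) {x : ι → E}
    (hx : ∀ i, T i (∑ j, W i j • x j) = x i) (i : ι) : ∑ j, W i j • x j = x i := by
  set y : ι → E := fun i => ∑ j, W i j • x j
  have hle (i : ι) : ‖x i - c‖ ≤ ‖y i - c‖ := by
    by_cases h : T i (y i) = y i
    · rw [← hx i, h]
    · exact (hx i ▸ hT i (y i) h).le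
  by_contra hne
  have hmove : T i (y i) ≠ y i := fun h => hne (h.symm.trans (hx i))
  have hlt : ∑ i, ‖x i - c‖ < ∑ i, ‖y i - c‖ :=
    sum_lt_sum (fun i _ => hle i) ⟨i, mem_univ i, hx i ▸ hT i (y i) hmove⟩
  exact (sum_norm_sum_smul_sub_le hW x c).not_gt hlt

end Paracontraction

section Games

variable {N : ℕ} (v : Finset (Fin N) → ℝ)

lemma core_subset_boundingSet (i : Fin N) : core v ⊆ boundingSet v i :=
  fun _ hx => ⟨hx.1, fun S hS => hx.2 S ⟨i, hS⟩⟩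

lemma iInter_boundingSet_eq_core (hN : 0 < N) : ⋂ i, boundingSet v i = core v := by
  refine Set.Subset.antisymm (fun x hx => ?_) (Set.subset_iInter (core_subset_boundingSet v))
  rw [Set.mem_iInter] at hx
  exact ⟨(hx ⟨0, hN⟩).1, fun S ⟨i, hi⟩ => (hx i).2 S hi⟩

end Games

theorem stmt_16_general (N : ℕ) (hN : 0 < N)
    (v : Finset (Fin N) → ℝ)
    (hcore : (core v).Nonempty)
    (T : Fin N → EuclideanSpace ℝ (Fin N) → EuclideanSpace ℝ (Fin N))
    (hpara : ∀ i, IsParacontraction (T i))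
    (hfixT : ∀ i, {x | T i x = x} = boundingSet v i)
    (W : Matrix (Fin N) (Fin N) ℝ)
    (hnonneg : ∀ i j, 0 ≤ W i j)
    (hrow : ∀ i, ∑ j, W i j = 1)
    (hcol : ∀ j, ∑ i, W i j = 1)
    (hirr : ∀ i j, ∃ m, 1 ≤ m ∧ 0 < (W ^ m) i j) :
    {x : Fin N → EuclideanSpace ℝ (Fin N) | (fun i => T i (∑ j, W i j • x j)) = x} =
      {x : Fin N → EuclideanSpace ℝ (Fin N) |
        (∀ i j, x i = x j) ∧ ∀ i, x i ∈ ⋂ j, boundingSet v j} ∧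
    {x : Fin N → EuclideanSpace ℝ (Fin N) |
        (∀ i j, x i = x j) ∧ ∀ i, x i ∈ ⋂ j, boundingSet v j} =
      {x : Fin N → EuclideanSpace ℝ (Fin N) | ∃ c ∈ core v, x = fun _ => c} := by
  obtain ⟨c, hc⟩ := hcore
  have hW : W ∈ doublyStochastic ℝ (Fin N) :=
    mem_doublyStochastic_iff_sum.2 ⟨hnonneg, hrow, hcol⟩
  have hfix (i : Fin N) (z) : T i z = z ↔ z ∈ boundingSet v i := Set.ext_iff.1 (hfixT i) z
  have hcontract (i : Fin N) := hpara i c ((hfix i c).2 (core_subset_boundingSet v i hc))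
  refine ⟨Set.ext fun x => ⟨fun hx => ?_, fun ⟨hcons, hmem⟩ => ?_⟩, ?_⟩
  · have havg := sum_smul_eq_self_of_paracontraction hW T c hcontract (congrFun hx)
    have hcons := eq_of_sum_smul_eq_self
      (mem_doublyStochastic_iff_mem_rowStochastic_and_mem_colStochastic.1 hW).1
      (fun i j => (hirr i j).imp fun _ h => h.2) havg
    have hmem (j : Fin N) : x j ∈ boundingSet v j :=
      (hfix j _).1 (by simpa only [havg j] using congrFun hx j)
    exact ⟨hcons, fun i => Set.mem_iInter.2 fun j => hcons i j ▸ hmem j⟩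
  · funext i
    simp only [hcons _ i, ← sum_smul, hrow i, one_smul]
    exact (hfix i _).2 (Set.mem_iInter.1 (hmem i) i)
  · rw [iInter_boundingSet_eq_core v hN]
    ext x
    constructor
    · rintro ⟨hcons, hmem⟩
      exact ⟨x ⟨0, hN⟩, hmem _, funext fun i => hcons i _⟩
    · rintro ⟨c', hc', rfl⟩
      exact ⟨fun _ _ => rfl, fun _ => hc'⟩

/-- for blockwise paracontractions `T_i` with `fix(T_i) = X_i(v)` and an
irreducible symmetric doubly stochastic `W` with positive diagonal,
`fix(T ∘ (W ⊗ I_N)) = A ∩ (⋂_i X_i(v))^N = {(c,…,c) : c ∈ C(v)}`. -/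
theorem stmt_16 (N : ℕ) (hN : 0 < N)
    (v : Finset (Fin N) → ℝ) (hv : v ∅ = 0)
    (hcore : (core v).Nonempty)
    (T : Fin N → EuclideanSpace ℝ (Fin N) → EuclideanSpace ℝ (Fin N))
    (hpara : ∀ i, IsParacontraction (T i))
    (hfixT : ∀ i, {x | T i x = x} = boundingSet v i)
    (W : Matrix (Fin N) (Fin N) ℝ)
    (hsymm : W.IsSymm)
    (hnonneg : ∀ i j, 0 ≤ W i j)
    (hrow : ∀ i, ∑ j, W i j = 1)
    (hcol : ∀ j, ∑ i, W i j = 1)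
    (hdiag : ∀ i, 0 < W i i)
    (hirr : ∀ i j, ∃ m, 1 ≤ m ∧ 0 < (W ^ m) i j) :
    {x : Fin N → EuclideanSpace ℝ (Fin N) | (fun i => T i (∑ j, W i j • x j)) = x} =
      {x : Fin N → EuclideanSpace ℝ (Fin N) |
        (∀ i j, x i = x j) ∧ ∀ i, x i ∈ ⋂ j, boundingSet v j} ∧
    {x : Fin N → EuclideanSpace ℝ (Fin N) |
        (∀ i j, x i = x j) ∧ ∀ i, x i ∈ ⋂ j, boundingSet v j} =
      {x : Fin N → EuclideanSpace ℝ (Fin N) | ∃ c ∈ core v, x = fun _ => c} :=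
  stmt_16_general N hN v hcore T hpara hfixT W hnonneg hrow hcol hirr
end
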